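/- arXiv:1912.04553 — 2 statements merged into one kernel-verified Lean document; each statement's English description precedes it below -/
import Mathlib

section
/- Let G ≤ Homeo+(S^1), L a G-invariant lamination system, and P an ideal polygon of L that is not a leaf. If g ∈ G is such that three distinct elements I_1, I_2, I_3 of P each have closure containing a fixed point of g, then g fixes every vertex of P (P is g-fixed). -/
open Set Topology

noncomputable section

/-- Stereographic projection from `1 ∈ S¹`. -/
def sproj (z : Circle) : ℝ := (z : ℂ).im / ((z : ℂ).re - 1)

/-- `(a,b,c)` is a positively oriented triple on `S¹`. -/
def posOri (a b c : Circle) : Prop :=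
  a ≠ b ∧ b ≠ c ∧ c ≠ a ∧ sproj (a⁻¹ * b) < sproj (a⁻¹ * c)

/-- The nondegenerate open interval `(u,v)` on `S¹`. -/
def oInt (u v : Circle) : Set Circle := {p | posOri u p v}

/-- `I` is a nondegenerate open interval on `S¹`. -/
def IsND (I : Set Circle) : Prop := ∃ u v : Circle, u ≠ v ∧ I = oInt u v

/-- The dual interval `I* = (v,u)` of `I = (u,v)`, i.e. the interior of the complement. -/
def dual (I : Set Circle) : Set Circle := interior Iᶜ

/-- The leaf `{I, I*}` lies on `J`. -/
def LiesOn (I J : Set Circle) : Prop := I ⊆ J ∨ dual I ⊆ J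

/-- A lamination system on `S¹`. -/
structure LamSys (L : Set (Set Circle)) : Prop where
  nonempty : L.Nonempty
  nd : ∀ I ∈ L, IsND I
  dualMem : ∀ I ∈ L, dual I ∈ L
  unlinked : ∀ I ∈ L, ∀ J ∈ L, LiesOn I J ∨ LiesOn I (dual J)
  chainUnion : ∀ f : ℕ → Set Circle, (∀ n, f n ∈ L) → (∀ n, f n ⊆ f (n + 1)) →
    IsND (⋃ n, f n) → (⋃ n, f n) ∈ L

/-- The leaf associated to an interval. -/
def leafOf (I : Set Circle) : Set (Set Circle) := {I, dual I}

/-- `liminf` of a sequence of sets. -/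
def sLiminf (f : ℕ → Set Circle) : Set Circle := ⋃ k, ⋂ n, ⋂ (_ : k ≤ n), f n

/-- `limsup` of a sequence of sets. -/
def sLimsup (f : ℕ → Set Circle) : Set Circle := ⋂ k, ⋃ n, ⋃ (_ : k ≤ n), f n

/-- The sequence of intervals converges to `J`. -/
def ConvTo (f : ℕ → Set Circle) (J : Set Circle) : Prop :=
  J ⊆ sLiminf f ∧ sLiminf f ⊆ sLimsup f ∧ sLimsup f ⊆ closure J

/-- A gap of a lamination system. -/
def IsGap (L G : Set (Set Circle)) : Prop :=
  G ⊆ L ∧ (∀ I ∈ G, ∀ J ∈ G, I ≠ J → I ∩ J = ∅) ∧ ∀ I ∈ L, ∃ J ∈ G, LiesOn I J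

/-- A gap which is a leaf. -/
def IsLeafGap (G : Set (Set Circle)) : Prop := ∃ I, G = leafOf I

/-- The vertex (endpoint) set of a gap. -/
def vset (G : Set (Set Circle)) : Set Circle := (⋃₀ G)ᶜ

/-- A very full lamination system: every gap is an ideal polygon (finite vertex set). -/
def VeryFull (L : Set (Set Circle)) : Prop := ∀ G, IsGap L G → (vset G).Finite

/-- The set of endpoints of leaves of `L`. -/
def ELset (L : Set (Set Circle)) : Set Circle := ⋃ I ∈ L, frontier I

/-- A rainbow at `p`. -/
def Rainbow (L : Set (Set Circle)) (p : Circle) (f : ℕ → Set Circle) : Prop :=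
  (∀ n, f n ∈ L) ∧ (∀ n, f (n + 1) ⊆ f n) ∧ (⋂ n, f n) = {p}

/-- An `I`-side sequence of leaves. -/
def SideSeq (L : Set (Set Circle)) (I : Set Circle) (f : ℕ → Set Circle) : Prop :=
  (∀ n, f n ∈ L) ∧ (∀ n, I ∉ leafOf (f n)) ∧ (∀ n, LiesOn (f n) I) ∧ ConvTo f I

/-- `I` is isolated in `L`. -/
def IsolatedInt (L : Set (Set Circle)) (I : Set Circle) : Prop := ∀ f, ¬ SideSeq L I f

/-- `C_p^I`. -/
def Cset (L : Set (Set Circle)) (p : Circle) (I : Set Circle) : Set (Set Circle) :=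
  {J ∈ L | p ∈ J ∧ J ⊆ I}

/-- The group of self-homeomorphisms of the circle (composition as multiplication). -/
instance : Group (Circle ≃ₜ Circle) where
  mul g h := h.trans g
  one := Homeomorph.refl _
  inv := Homeomorph.symm
  mul_assoc _ _ _ := Homeomorph.ext fun _ => rfl
  one_mul _ := Homeomorph.ext fun _ => rfl
  mul_one _ := Homeomorph.ext fun _ => rfl
  inv_mul_cancel g := Homeomorph.ext fun x => g.symm_apply_apply x

/-- An orientation-preserving homeomorphism of the circle. -/
def OrientPres (g : Circle ≃ₜ Circle) : Prop :=
  ∀ a b c, posOri a b c → posOri (g a) (g b) (g c)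

/-- `L` is invariant under a subgroup `G` of homeomorphisms. -/
def GInv (G : Subgroup (Circle ≃ₜ Circle)) (L : Set (Set Circle)) : Prop :=
  ∀ g ∈ G, ∀ I ∈ L, (⇑g) '' I ∈ L

/-- The image of a gap under a homeomorphism. -/
def gapIm (g : Circle ≃ₜ Circle) (P : Set (Set Circle)) : Set (Set Circle) :=
  (fun I => (⇑g) '' I) '' P

/-- `v_G(P)`, the union of the vertex sets of the `G`-orbit of the gap `P`. -/
def vOrb (G : Subgroup (Circle ≃ₜ Circle)) (P : Set (Set Circle)) : Set Circle :=
  ⋃ g ∈ G, vset (gapIm g P)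

/-- A loose lamination system: distinct non-leaf gaps have disjoint vertex sets. -/
def Loose (L : Set (Set Circle)) : Prop :=
  ∀ P Q, IsGap L P → IsGap L Q → ¬ IsLeafGap P → ¬ IsLeafGap Q → P ≠ Q →
    vset P ∩ vset Q = ∅

/-- A pseudo-fibered triple `(L₁, L₂, G)`. -/
structure PFib (L₁ L₂ : Set (Set Circle)) (G : Subgroup (Circle ≃ₜ Circle)) : Prop where
  orient : ∀ g ∈ G, OrientPres g
  fg : G.FG
  lam₁ : LamSys L₁
  lam₂ : LamSys L₂
  inv₁ : GInv G L₁
  inv₂ : GInv G L₂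
  veryFull₁ : VeryFull L₁
  veryFull₂ : VeryFull L₂
  loose₁ : Loose L₁
  loose₂ : Loose L₂
  disjEnds : ELset L₁ ∩ ELset L₂ = ∅

end

/-!
Fix a point `x` fixed by `g` in the closure of a side `A`, and measure angles counterclockwise
from `x` (Mathlib's `Circle.angleDiff x`). In this coordinate `g` is strictly increasing, positive
orientation is the cyclic order of angles, and every arc avoiding `x` is an interval.

Then `g '' A ⊆ A`. Otherwise the leaf `g '' A` lies on a side `J` through its dual, and one of
the two other sides, `W ≠ J`, lies in `dual A` but misses `g '' dual A`. In the angular coordinate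
`W` then sits between an endpoint `p` of `dual A` and its image `g p`, so a fixed point in the
closure of `W` contradicts monotonicity. Applied to `g` and `g⁻¹` this gives `g '' A = A`. Two
invariant sides force `g` to permute the finitely many sides of `P`, so some power of `g` fixes
each side and hence its endpoints; and a point whose orbit under an increasing map returns to it
is already fixed.
-/

open Circle
open scoped Real

namespace Circle

variable {x y : Circle}

lemma angleDiff_self (x : Circle) : angleDiff x x = 0 := by
  simp [angleDiff]

lemma angleDiff_eq_zero_iff : angleDiff x y = 0 ↔ x = y :=
  ⟨fun h => by_contra fun hne => (angleDiff_pos hne).ne' h, fun h => h ▸ angleDiff_self x⟩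

lemma angleDiff_mem_Ico (x y : Circle) : angleDiff x y ∈ Ico 0 (2 * π) :=
  ⟨angleDiff_nonneg x y, angleDiff_lt_two_pi x y⟩

lemma angleDiff_mem_Ioo (h : x ≠ y) : angleDiff x y ∈ Ioo 0 (2 * π) :=
  ⟨angleDiff_pos h, angleDiff_lt_two_pi x y⟩

lemma angleDiff_eq_of_exp_mul {t : ℝ} (ht : t ∈ Ico 0 (2 * π)) (h : exp t * x = y) :
    angleDiff x y = t :=
  exp_injOn_Ico (by simp) (angleDiff_mem_Ico x y) ((zero_add (2 * π)).symm ▸ ht)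
    (mul_right_cancel (exp_angleDiff_mul.trans h.symm))

lemma angleDiff_exp_mul (x : Circle) {t : ℝ} (ht : t ∈ Ico 0 (2 * π)) :
    angleDiff x (exp t * x) = t :=
  angleDiff_eq_of_exp_mul ht rfl

lemma angleDiff_injective (x : Circle) : Function.Injective (angleDiff x) := fun y z h => by
  rw [← exp_angleDiff_mul (x := x) (y := y), h, exp_angleDiff_mul]

lemma two_pi_sub_angleDiff (h : y ≠ x) : 2 * π - angleDiff y x = angleDiff x y := by
  linarith [angleDiff_add_angleDiff h.symm]

lemma inv_mul_eq_exp_angleDiff (x y : Circle) : x⁻¹ * y = exp (angleDiff x y) := by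
  rw [inv_mul_eq_iff_eq_mul, mul_comm, exp_angleDiff_mul]

lemma angleDiff_eq_ite (x a y : Circle) : angleDiff a y =
    if angleDiff x a ≤ angleDiff x y then angleDiff x y - angleDiff x a
    else angleDiff x y - angleDiff x a + 2 * π := by
  have ha := angleDiff_mem_Ico x a
  have hy := angleDiff_mem_Ico x y
  have key : exp (angleDiff x y - angleDiff x a) * a = y := by
    nth_rw 2 [← exp_angleDiff_mul (x := x) (y := a)]
    rw [← mul_assoc, ← exp_add, sub_add_cancel, exp_angleDiff_mul]
  split_ifs with h
  · exact angleDiff_eq_of_exp_mul ⟨by linarith, by linarith [hy.2, ha.1]⟩ key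
  · refine angleDiff_eq_of_exp_mul ⟨by linarith [ha.2, hy.1], by linarith⟩ ?_
    rwa [exp_add_two_pi]

lemma interior_eq_empty_of_finite {s : Set Circle} (hs : s.Finite) : interior s = ∅ := by
  have hc : IsClopen (interior s) := ⟨(hs.subset interior_subset).isClosed, isOpen_interior⟩
  refine (isClopen_iff.mp hc).resolve_right fun h => ?_
  have huniv : (univ : Set Circle).Finite := hs.subset (h ▸ interior_subset)
  exact ((Ico_infinite Real.two_pi_pos).image (exp_injOn_Ico (by simp))).mono (subset_univ _) huniv

end Circle

section Orientation

variable {x a b c p : Circle}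

lemma sproj_exp {t : ℝ} (ht : t ∈ Ioo 0 (2 * π)) :
    sproj (exp t) = Real.tan (t / 2 - π / 2) := by
  have hs : 0 < Real.sin (t / 2) :=
    Real.sin_pos_of_pos_of_lt_pi (by linarith [ht.1]) (by linarith [ht.2])
  have hsin : Real.sin t = 2 * Real.sin (t / 2) * Real.cos (t / 2) := by
    rw [← Real.sin_two_mul, mul_div_cancel₀ _ two_ne_zero]
  have hcos : Real.cos t = 1 - 2 * Real.sin (t / 2) ^ 2 := by
    have h := Real.cos_two_mul' (t / 2)
    rw [mul_div_cancel₀ _ two_ne_zero] at h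
    linarith [Real.sin_sq_add_cos_sq (t / 2)]
  rw [sproj, coe_exp, Complex.exp_ofReal_mul_I_re, Complex.exp_ofReal_mul_I_im,
    Real.tan_eq_sin_div_cos, Real.sin_sub_pi_div_two, Real.cos_sub_pi_div_two, hsin, hcos]
  field_simp
  ring

lemma sproj_exp_lt_sproj_exp {s t : ℝ} (hs : s ∈ Ioo 0 (2 * π)) (ht : t ∈ Ioo 0 (2 * π)) :
    sproj (exp s) < sproj (exp t) ↔ s < t := by
  have hmem : ∀ r ∈ Ioo 0 (2 * π), r / 2 - π / 2 ∈ Ioo (-(π / 2)) (π / 2) := fun r hr =>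
    ⟨by linarith [hr.1], by linarith [hr.2]⟩
  rw [sproj_exp hs, sproj_exp ht, Real.strictMonoOn_tan.lt_iff_lt (hmem s hs) (hmem t ht)]
  constructor <;> intro h <;> linarith

lemma posOri_iff_angleDiff_lt :
    posOri a b c ↔ a ≠ b ∧ b ≠ c ∧ c ≠ a ∧ angleDiff a b < angleDiff a c := by
  refine and_congr_right fun hab => and_congr_right fun _ => and_congr_right fun hca => ?_
  rw [inv_mul_eq_exp_angleDiff, inv_mul_eq_exp_angleDiff,
    sproj_exp_lt_sproj_exp (angleDiff_mem_Ioo hab) (angleDiff_mem_Ioo hca.symm)]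

lemma posOri_iff (x : Circle) : posOri a p b ↔
    angleDiff x a < angleDiff x p ∧ angleDiff x p < angleDiff x b ∨
    angleDiff x p < angleDiff x b ∧ angleDiff x b < angleDiff x a ∨
    angleDiff x b < angleDiff x a ∧ angleDiff x a < angleDiff x p := by
  rw [posOri_iff_angleDiff_lt, angleDiff_eq_ite x a p, angleDiff_eq_ite x a b,
    ← (angleDiff_injective x).ne_iff, ← (angleDiff_injective x).ne_iff,
    ← (angleDiff_injective x).ne_iff]
  have := angleDiff_mem_Ico x a
  have := angleDiff_mem_Ico x p
  have := angleDiff_mem_Ico x b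
  split_ifs <;> grind

lemma posOri_left_iff : posOri x p b ↔ 0 < angleDiff x p ∧ angleDiff x p < angleDiff x b := by
  have := angleDiff_nonneg x p
  have := angleDiff_nonneg x b
  rw [posOri_iff x, angleDiff_self]
  grind

lemma posOri_right_iff : posOri a p x ↔ 0 < angleDiff x a ∧ angleDiff x a < angleDiff x p := by
  have := angleDiff_nonneg x p
  have := angleDiff_nonneg x a
  rw [posOri_iff x, angleDiff_self]
  grind

lemma posOri_of_angleDiff_lt (h₁ : angleDiff x a < angleDiff x p)
    (h₂ : angleDiff x p < angleDiff x b) : posOri a p b :=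
  (posOri_iff x).mpr (.inl ⟨h₁, h₂⟩)

lemma not_posOri_of_angleDiff_lt (h : angleDiff x a < angleDiff x b) : ¬ posOri a x b := by
  have := angleDiff_nonneg x a
  have := angleDiff_nonneg x b
  rw [posOri_iff x, angleDiff_self]
  grind

lemma posOri_or_posOri (hap : a ≠ p) (hpb : p ≠ b) (hba : b ≠ a) :
    posOri a p b ∨ posOri b p a := by
  rw [posOri_left_iff, posOri_right_iff]
  rcases ((angleDiff_injective a).ne hpb).lt_or_gt with hlt | hlt
  · exact .inl ⟨angleDiff_pos hap, hlt⟩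
  · exact .inr ⟨angleDiff_pos hba.symm, hlt⟩

lemma not_posOri_of_posOri (h : posOri a p b) : ¬ posOri b p a := by
  rw [posOri_left_iff] at h
  rw [posOri_right_iff]
  intro h'
  linarith [h.2, h'.2]

end Orientation

section Arcs

variable {u v u' v' : Circle}

lemma oInt_eq_image (u v : Circle) :
    oInt u v = (fun t => exp t * u) '' Ioo 0 (angleDiff u v) := by
  ext p
  refine ⟨fun hp => ⟨angleDiff u p, posOri_left_iff.mp hp, exp_angleDiff_mul⟩, ?_⟩
  rintro ⟨t, ht, rfl⟩
  have htI : t ∈ Ico 0 (2 * π) := ⟨ht.1.le, ht.2.trans (angleDiff_lt_two_pi u v)⟩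
  show posOri u _ v
  rw [posOri_left_iff, angleDiff_exp_mul u htI]
  exact ht

lemma oInt_self (u : Circle) : oInt u u = ∅ := by
  simp [oInt_eq_image, angleDiff_self]

lemma oInt_nonempty (h : u ≠ v) : (oInt u v).Nonempty := by
  rw [oInt_eq_image]
  exact (nonempty_Ioo.mpr (angleDiff_pos h)).image _

lemma isOpen_oInt (u v : Circle) : IsOpen (oInt u v) := by
  rw [oInt_eq_image, show (fun t => exp t * u) = (· * u) ∘ exp from rfl, image_comp]
  exact (Homeomorph.mulRight u).isOpenMap _ (isLocalHomeomorph_circleExp.isOpenMap _ isOpen_Ioo)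

lemma compl_oInt (h : u ≠ v) : (oInt u v)ᶜ = oInt v u ∪ {u, v} := by
  ext p
  have hd := angleDiff_pos h
  have := angleDiff_nonneg u p
  have hu : p = u ↔ angleDiff u p = 0 := by rw [angleDiff_eq_zero_iff, eq_comm]
  simp only [mem_compl_iff, mem_union, mem_insert_iff, mem_singleton_iff, oInt, mem_ofPred_eq,
    posOri_left_iff (x := u), posOri_right_iff (x := u), hu,
    ← (angleDiff_injective u).eq_iff (a := p) (b := v)]
  grind

lemma closure_oInt (h : u ≠ v) : closure (oInt u v) = oInt u v ∪ {u, v} := by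
  have hd := angleDiff_pos h
  have hc : Continuous fun t => exp t * u := by fun_prop
  have hIcc : (fun t => exp t * u) '' Icc 0 (angleDiff u v) = oInt u v ∪ {u, v} := by
    rw [← Ico_insert_right hd.le, ← Ioo_insert_left hd, image_insert_eq, image_insert_eq,
      ← oInt_eq_image, exp_angleDiff_mul, Circle.exp_zero, one_mul]
    ext
    simp only [mem_insert_iff, mem_union, mem_singleton_iff]
    tauto
  rw [← hIcc]
  refine (closure_minimal ?_ ((isCompact_Icc.image hc).isClosed)).antisymm ?_
  · rw [oInt_eq_image]
    exact image_mono Ioo_subset_Icc_self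
  · rw [← closure_Ioo hd.ne, oInt_eq_image]
    exact image_closure_subset_closure_image hc

lemma closure_oInt_eq_compl (h : u ≠ v) : closure (oInt u v) = (oInt v u)ᶜ := by
  rw [closure_oInt h, compl_oInt h.symm, pair_comm]

lemma dual_oInt (h : u ≠ v) : dual (oInt u v) = oInt v u := by
  rw [dual, interior_compl, closure_oInt_eq_compl h, compl_compl]

lemma subset_dual_of_disjoint {I J : Set Circle} (hI : IsOpen I) (h : Disjoint I J) :
    I ⊆ dual J :=
  interior_maximal (subset_compl_iff_disjoint_right.mpr h) hI

lemma oInt_eq_oInt_iff (h : u ≠ v) (h' : u' ≠ v') :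
    oInt u v = oInt u' v' ↔ u = u' ∧ v = v' := by
  refine ⟨fun he => ?_, fun ⟨rfl, rfl⟩ => rfl⟩
  have hc : oInt u v ∪ {u, v} = oInt u' v' ∪ {u', v'} := by
    rw [← closure_oInt h, ← closure_oInt h', he]
  have hmem : ∀ w ∈ ({u, v} : Set Circle), w ∈ ({u', v'} : Set Circle) := by
    intro w hw
    have hw' : w ∈ oInt u' v' ∪ {u', v'} := hc ▸ mem_union_right _ hw
    refine hw'.resolve_left fun hwo => ?_
    rw [← he] at hwo
    rcases hw with rfl | rfl
    · exact hwo.1 rfl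
    · exact hwo.2.1 rfl
  simp only [mem_insert_iff, mem_singleton_iff, forall_eq_or_imp, forall_eq] at hmem
  obtain ⟨hu | hu, hv | hv⟩ := hmem
  · exact absurd (hu.trans hv.symm) h
  · exact ⟨hu, hv⟩
  · subst hu hv
    obtain ⟨p, hp⟩ := oInt_nonempty h
    have hp' : p ∈ oInt v u := he ▸ hp
    exact (not_posOri_of_posOri hp hp').elim
  · exact absurd (hu.trans hv.symm) h

end Arcs

section AngularInterval

variable {x a b c d p : Circle}

/-- An arc `oInt a b` avoiding `x` is an interval of angles from `x`; its right end is read in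
`(0, 2π]`, so that `b = x` gives `2π`. -/
lemma mem_oInt_iff_of_not_mem (hab : a ≠ b) (hx : x ∉ oInt a b) :
    p ∈ oInt a b ↔ angleDiff x a < angleDiff x p ∧ angleDiff x p < 2 * π - angleDiff b x := by
  have hx' := mt (posOri_iff x).mpr hx
  have hab' := (angleDiff_injective x).ne hab
  have := angleDiff_nonneg x a
  have := angleDiff_nonneg x p
  have := angleDiff_lt_two_pi x p
  show posOri a p b ↔ _
  rw [posOri_iff x]
  rw [angleDiff_self] at hx'
  rcases eq_or_ne b x with rfl | hb
  · rw [angleDiff_self] at hab' ⊢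
    grind
  · have := angleDiff_pos hb.symm
    rw [two_pi_sub_angleDiff hb]
    grind

lemma Ioo_eq_inter_preimage_oInt (hab : a ≠ b) (hx : x ∉ oInt a b) :
    Ioo (angleDiff x a) (2 * π - angleDiff b x) =
      Ico 0 (2 * π) ∩ (fun t => exp t * x) ⁻¹' oInt a b := by
  ext t
  simp only [mem_Ioo, mem_inter_iff, mem_Ico, mem_preimage]
  constructor
  · rintro ⟨h1, h2⟩
    have ht : t ∈ Ico 0 (2 * π) :=
      ⟨(angleDiff_nonneg x a).trans h1.le, h2.trans_le (by linarith [angleDiff_nonneg b x])⟩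
    refine ⟨ht, (mem_oInt_iff_of_not_mem hab hx).mpr ?_⟩
    rw [angleDiff_exp_mul x ht]
    exact ⟨h1, h2⟩
  · rintro ⟨ht, hmem⟩
    rw [mem_oInt_iff_of_not_mem hab hx, angleDiff_exp_mul x ht] at hmem
    exact hmem

lemma angleDiff_lt_of_not_mem (hab : a ≠ b) (hx : x ∉ oInt a b) :
    angleDiff x a < 2 * π - angleDiff b x := by
  obtain ⟨p, hp⟩ := oInt_nonempty hab
  rw [mem_oInt_iff_of_not_mem hab hx] at hp
  exact hp.1.trans hp.2

lemma angleDiff_le_of_oInt_subset (hab : a ≠ b) (hcd : c ≠ d) (hx : x ∉ oInt c d)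
    (h : oInt a b ⊆ oInt c d) :
    angleDiff x c ≤ angleDiff x a ∧ 2 * π - angleDiff b x ≤ 2 * π - angleDiff d x := by
  have hxab : x ∉ oInt a b := fun hxab => hx (h hxab)
  rw [← Ioo_subset_Ioo_iff (angleDiff_lt_of_not_mem hab hxab),
    Ioo_eq_inter_preimage_oInt hab hxab, Ioo_eq_inter_preimage_oInt hcd hx]
  exact inter_subset_inter_right _ (preimage_mono h)

lemma le_or_le_of_disjoint_oInt (hab : a ≠ b) (hcd : c ≠ d) (hxab : x ∉ oInt a b)
    (hxcd : x ∉ oInt c d) (h : Disjoint (oInt a b) (oInt c d)) :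
    2 * π - angleDiff b x ≤ angleDiff x c ∨ 2 * π - angleDiff d x ≤ angleDiff x a := by
  have h' : Disjoint (Ioo (angleDiff x a) (2 * π - angleDiff b x))
      (Ioo (angleDiff x c) (2 * π - angleDiff d x)) := by
    rw [Ioo_eq_inter_preimage_oInt hab hxab, Ioo_eq_inter_preimage_oInt hcd hxcd]
    exact (h.preimage _).mono inter_subset_right inter_subset_right
  rw [Ioo_disjoint_Ioo] at h'
  have := angleDiff_lt_of_not_mem hab hxab
  have := angleDiff_lt_of_not_mem hcd hxcd
  rcases le_total (2 * π - angleDiff b x) (2 * π - angleDiff d x) with h1 | h1 <;>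
  rcases le_total (angleDiff x a) (angleDiff x c) with h2 | h2 <;>
  simp only [min_eq_left, min_eq_right, max_eq_left, max_eq_right, h1, h2] at h' <;>
  first | exact .inl h' | exact .inr h' | (exfalso; linarith)

end AngularInterval

namespace Homeomorph

variable (g : Circle ≃ₜ Circle)

lemma inv_image_image (s : Set Circle) : ⇑(g⁻¹) '' (g '' s) = s :=
  g.toEquiv.symm_image_image s

lemma image_inv_image (s : Set Circle) : g '' (⇑(g⁻¹) '' s) = s :=
  g.toEquiv.image_symm_image s

lemma setOf_inv_apply_eq : {y | g⁻¹ y = y} = {y | g y = y} := by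
  ext y
  exact g.symm_apply_eq.trans eq_comm

lemma inv_apply_eq_self {y : Circle} (h : g y = y) : g⁻¹ y = y :=
  g.symm_apply_eq.mpr h.symm

lemma pow_succ_apply (k : ℕ) (p : Circle) : (g ^ (k + 1)) p = g ((g ^ k) p) := by
  rw [pow_succ']
  rfl

end Homeomorph

namespace OrientPres

variable {g : Circle ≃ₜ Circle} {x y p q a b u v : Circle}

lemma image_oInt (hg : OrientPres g) (u v : Circle) : g '' oInt u v = oInt (g u) (g v) := by
  rcases eq_or_ne u v with rfl | huv
  · simp [oInt_self]
  refine Subset.antisymm (image_subset_iff.mpr fun p hp => hg u p v hp) fun q hq => ?_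
  refine ⟨g.symm q, ?_, g.apply_symm_apply q⟩
  have h1 : u ≠ g.symm q := fun h => hq.1 (by rw [h, g.apply_symm_apply])
  have h2 : g.symm q ≠ v := fun h => hq.2.1 (by rw [← h, g.apply_symm_apply])
  refine (posOri_or_posOri h1 h2 huv.symm).resolve_right fun h => ?_
  have := hg _ _ _ h
  rw [g.apply_symm_apply] at this
  exact not_posOri_of_posOri hq this

lemma inv (hg : OrientPres g) : OrientPres g⁻¹ := fun a b c h => by
  have : b ∈ g '' oInt (g.symm a) (g.symm c) := by
    rw [hg.image_oInt, g.apply_symm_apply, g.apply_symm_apply]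
    exact h
  obtain ⟨b', hb', rfl⟩ := this
  show posOri (g.symm a) (g.symm (g b')) (g.symm c)
  rwa [g.symm_apply_apply]

lemma angleDiff_lt_angleDiff_of_lt (hg : OrientPres g) (hgx : g x = x)
    (h : angleDiff x p < angleDiff x q) : angleDiff x (g p) < angleDiff x (g q) := by
  have hq : x ≠ q := by
    rintro rfl
    linarith [angleDiff_self x, angleDiff_nonneg x p]
  have hgq : x ≠ g q := fun h' => hq (g.injective (hgx.trans h'))
  rcases eq_or_ne x p with rfl | hp
  · rw [hgx, angleDiff_self]
    exact angleDiff_pos hgq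
  have := hg _ _ _ (posOri_left_iff.mpr ⟨angleDiff_pos hp, h⟩)
  rw [hgx] at this
  exact (posOri_left_iff.mp this).2

lemma angleDiff_lt_angleDiff_iff (hg : OrientPres g) (hgx : g x = x) :
    angleDiff x (g p) < angleDiff x (g q) ↔ angleDiff x p < angleDiff x q := by
  refine ⟨fun h => ?_, hg.angleDiff_lt_angleDiff_of_lt hgx⟩
  rcases lt_trichotomy (angleDiff x p) (angleDiff x q) with hlt | heq | hgt
  · exact hlt
  · rw [angleDiff_injective x heq] at h
    exact absurd h (lt_irrefl _)
  · exact absurd (hg.angleDiff_lt_angleDiff_of_lt hgx hgt) h.not_gt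

/-- Along the orbit of `p` the angle from the fixed point `x` moves monotonically, so the orbit
returns to `p` only if `p` is fixed. -/
lemma apply_eq_of_pow_apply_eq (hg : OrientPres g) (hgx : g x = x) {n : ℕ} (hn : 0 < n)
    (hp : (g ^ n) p = p) : g p = p := by
  set s : ℕ → ℝ := fun k => angleDiff x ((g ^ k) p) with hs
  have hs1 : s 1 = angleDiff x (g p) := by simp [hs]
  have hsn : s n = s 0 := by simp [hs, hp]
  have hmono : ∀ k, s (k + 1) < s (k + 2) ↔ s k < s (k + 1) := fun k => by
    simp only [hs, g.pow_succ_apply (k + 1), g.pow_succ_apply k]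
    exact hg.angleDiff_lt_angleDiff_iff hgx
  have hanti : ∀ k, s (k + 2) < s (k + 1) ↔ s (k + 1) < s k := fun k => by
    simp only [hs, g.pow_succ_apply (k + 1), g.pow_succ_apply k]
    exact hg.angleDiff_lt_angleDiff_iff hgx
  rcases lt_trichotomy (s 0) (s 1) with h | h | h
  · have : StrictMono s := strictMono_nat_of_lt_succ fun k => by
      induction k with
      | zero => exact h
      | succ k ih => exact (hmono k).mpr ih
    exact absurd (this hn) (by rw [hsn]; exact lt_irrefl _)
  · exact (angleDiff_injective x (hs1 ▸ h)).symm
  · have : StrictAnti s := strictAnti_nat_of_succ_lt fun k => by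
      induction k with
      | zero => exact h
      | succ k ih => exact (hanti k).mpr ih
    exact absurd (this hn) (by rw [hsn]; exact lt_irrefl _)

lemma apply_ne_of_mem_oInt_apply (hg : OrientPres g) (hgx : g x = x) (hx : x ∉ oInt p (g p))
    (hy : y ∈ oInt p (g p)) : g y ≠ y := by
  intro hgy
  have hp : p ≠ g p := by
    rintro h
    rw [← h, oInt_self] at hy
    exact hy
  have hgp : g p ≠ x := fun h => hp ((g.injective (h.trans hgx.symm)).trans h.symm)
  rw [mem_oInt_iff_of_not_mem hp hx, two_pi_sub_angleDiff hgp] at hy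
  have := hg.angleDiff_lt_angleDiff_of_lt hgx hy.1
  rw [hgy] at this
  exact lt_asymm this hy.2

lemma apply_ne_of_mem_closure (hg : OrientPres g) (hgx : g x = x) (hx : x ∉ oInt p (g p))
    {W : Set Circle} (hW : W.Nonempty) (hsub : W ⊆ oInt p (g p)) (hy : y ∈ closure W) :
    g y ≠ y := by
  intro hgy
  have hp : p ≠ g p := by
    rintro h
    rw [← h, oInt_self] at hsub
    exact hW.ne_empty (subset_empty_iff.mp hsub)
  have hy' := closure_mono hsub hy
  rw [closure_oInt hp] at hy'
  rcases hy' with hy' | rfl | rfl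
  · exact hg.apply_ne_of_mem_oInt_apply hgx hx hy' hgy
  · exact hp hgy.symm
  · exact hp (g.injective hgy).symm

/-- A subarc missing `g '' oInt p q` lies between `p` and `g p` or between `g q` and `q`, where
monotonicity leaves no room for a fixed point. -/
lemma not_disjoint_image_oInt (hg : OrientPres g) (hgx : g x = x) (hx : x ∉ oInt p q)
    (hab : a ≠ b) (hsub : oInt a b ⊆ oInt p q) (hy : y ∈ closure (oInt a b)) (hgy : g y = y) :
    ¬ Disjoint (oInt a b) (g '' oInt p q) := by
  intro hd
  rw [hg.image_oInt] at hd
  have hpq : p ≠ q := by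
    rintro rfl
    rw [oInt_self] at hsub
    exact (oInt_nonempty hab).ne_empty (subset_empty_iff.mp hsub)
  have hxg : x ∉ oInt (g p) (g q) := by
    rw [← hg.image_oInt]
    rintro ⟨z, hz, hzx⟩
    rw [g.injective (hzx.trans hgx.symm)] at hz
    exact hx hz
  have hxab : x ∉ oInt a b := fun h => hx (hsub h)
  obtain ⟨hpa, hbq⟩ := angleDiff_le_of_oInt_subset hab hpq hx hsub
  have hab' := angleDiff_lt_of_not_mem hab hxab
  have hmem := fun z => mem_oInt_iff_of_not_mem hab hxab (p := z)
  rcases le_or_le_of_disjoint_oInt hab (g.injective.ne hpq) hxab hxg hd with h | h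
  · refine hg.apply_ne_of_mem_closure (p := p) hgx
      (not_posOri_of_angleDiff_lt (by linarith)) (oInt_nonempty hab) (fun z hz => ?_) hy hgy
    rw [hmem] at hz
    exact posOri_of_angleDiff_lt (hpa.trans_lt hz.1) (by linarith [hz.2])
  · have hq : q ≠ x := fun hqx => by
      rw [hqx, hgx, angleDiff_self] at h
      linarith [angleDiff_lt_two_pi x a]
    have hgq : g q ≠ x := fun h' => hq (g.injective (h'.trans hgx.symm))
    rw [two_pi_sub_angleDiff hq] at hbq
    rw [two_pi_sub_angleDiff hgq] at h
    have hq' : g⁻¹ (g q) = q := g.symm_apply_apply q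
    refine hg.inv.apply_ne_of_mem_closure (p := g q) (g.inv_apply_eq_self hgx)
      (by rw [hq']; exact not_posOri_of_angleDiff_lt (by linarith)) (oInt_nonempty hab)
      (fun z hz => ?_) hy (g.inv_apply_eq_self hgy)
    rw [hq']
    rw [hmem] at hz
    exact posOri_of_angleDiff_lt (h.trans_lt hz.1) (by linarith [hz.2])

lemma oInt_inter_image_nonempty (hg : OrientPres g) (hgx : g x = x) (huv : u ≠ v)
    (hx : x ∈ closure (oInt u v)) : (oInt u v ∩ g '' oInt u v).Nonempty := by
  rw [closure_oInt huv] at hx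
  rw [hg.image_oInt]
  rcases hx with hx | hxu | hxv
  · exact ⟨x, hx, by rw [← hgx]; exact hg _ _ _ hx⟩
  · subst hxu
    rw [hgx]
    obtain ⟨t, ht0, ht⟩ := exists_between (lt_min (angleDiff_pos huv)
      (angleDiff_pos (hgx ▸ g.injective.ne huv : x ≠ g v)))
    have htI : t ∈ Ico 0 (2 * π) := ⟨ht0.le, (lt_min_iff.mp ht).1.trans (angleDiff_lt_two_pi x v)⟩
    refine ⟨exp t * x, posOri_left_iff.mpr ?_, posOri_left_iff.mpr ?_⟩ <;>
      rw [angleDiff_exp_mul x htI]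
    · exact ⟨ht0, (lt_min_iff.mp ht).1⟩
    · exact ⟨ht0, (lt_min_iff.mp ht).2⟩
  · subst hxv
    rw [hgx]
    obtain ⟨t, ht, ht2⟩ := exists_between (max_lt (angleDiff_lt_two_pi x u)
      (angleDiff_lt_two_pi x (g u)))
    have htI : t ∈ Ico 0 (2 * π) := ⟨(angleDiff_nonneg x u).trans (max_lt_iff.mp ht).1.le, ht2⟩
    refine ⟨exp t * x, posOri_right_iff.mpr ⟨angleDiff_pos huv.symm, ?_⟩,
      posOri_right_iff.mpr ⟨angleDiff_pos (hgx ▸ g.injective.ne huv.symm : x ≠ g u), ?_⟩⟩ <;>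
      rw [angleDiff_exp_mul x htI]
    · exact (max_lt_iff.mp ht).1
    · exact (max_lt_iff.mp ht).2

end OrientPres

section Gap

variable {L P : Set (Set Circle)} {I J : Set Circle}

lemma LamSys.isOpen (hL : LamSys L) (hI : I ∈ L) : IsOpen I := by
  obtain ⟨u, v, -, rfl⟩ := hL.nd I hI
  exact isOpen_oInt u v

lemma LamSys.nonempty_of_mem (hL : LamSys L) (hI : I ∈ L) : I.Nonempty := by
  obtain ⟨u, v, huv, rfl⟩ := hL.nd I hI
  exact oInt_nonempty huv

namespace IsGap

lemma disjoint (hP : IsGap L P) (hI : I ∈ P) (hJ : J ∈ P) (hne : I ≠ J) : Disjoint I J :=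
  disjoint_iff_inter_eq_empty.mpr (hP.2.1 I hI J hJ hne)

lemma eq_of_not_disjoint (hP : IsGap L P) (hI : I ∈ P) (hJ : J ∈ P) (h : ¬ Disjoint I J) :
    I = J :=
  by_contra fun hne => h (hP.disjoint hI hJ hne)

lemma eq_of_subset (hL : LamSys L) (hP : IsGap L P) (hI : I ∈ P) (hJ : J ∈ P) (h : I ⊆ J) :
    I = J := by
  refine hP.eq_of_not_disjoint hI hJ fun hd => ?_
  obtain ⟨z, hz⟩ := hL.nonempty_of_mem (hP.1 hI)
  exact hd.ne_of_mem hz (h hz) rfl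

lemma eq_of_mem_closure (hL : LamSys L) (hP : IsGap L P) (hI : I ∈ P) (hJ : J ∈ P) {z : Circle}
    (hzI : z ∈ closure I) (hzJ : z ∈ J) : I = J :=
  hP.eq_of_not_disjoint hI hJ fun hd =>
    (mem_closure_iff.mp hzI J (hL.isOpen (hP.1 hJ)) hzJ).ne_empty hd.symm.inter_eq

lemma mem_vset_of_mem_closure (hL : LamSys L) (hP : IsGap L P) (hI : I ∈ P) {z : Circle}
    (hz : z ∈ closure I) (hzI : z ∉ I) : z ∈ vset P := by
  rintro ⟨J, hJ, hzJ⟩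
  exact hzI (hP.eq_of_mem_closure hL hI hJ hz hzJ ▸ hzJ)

lemma finite (hL : LamSys L) (hP : IsGap L P) (hfin : (vset P).Finite) : P.Finite := by
  refine (hfin.image2 oInt hfin).subset fun I hI => ?_
  obtain ⟨u, v, huv, rfl⟩ := hL.nd I (hP.1 hI)
  have hcl := closure_oInt huv
  exact mem_image2_of_mem
    (hP.mem_vset_of_mem_closure hL hI (hcl ▸ by simp) fun h => h.1 rfl)
    (hP.mem_vset_of_mem_closure hL hI (hcl ▸ by simp) fun h => h.2.1 rfl)

lemma exists_mem_closure (hL : LamSys L) (hP : IsGap L P) (hfin : (vset P).Finite)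
    (z : Circle) : ∃ I ∈ P, z ∈ closure I := by
  have hcl : z ∈ closure (⋃₀ P) := by
    rw [← compl_compl (closure _), ← interior_compl]
    exact fun hz' => (interior_eq_empty_of_finite hfin).subset hz'
  rw [(hP.finite hL hfin).closure_sUnion] at hcl
  simpa using hcl

variable {G : Subgroup (Circle ≃ₜ Circle)} {g : Circle ≃ₜ Circle} {A K I₁ I₂ W₁ W₂ : Set Circle}
  {x : Circle}

lemma image_subset_of_fixedPt (hL : LamSys L) (hP : IsGap L P) (hg : OrientPres g)
    (hA : A ∈ P) (hgA : g '' A ∈ L) (hx : x ∈ closure A) (hgx : g x = x)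
    (hW₁ : W₁ ∈ P) (hW₂ : W₂ ∈ P) (h12 : W₁ ≠ W₂) (hA₁ : A ≠ W₁) (hA₂ : A ≠ W₂)
    (hf₁ : (closure W₁ ∩ {y | g y = y}).Nonempty) (hf₂ : (closure W₂ ∩ {y | g y = y}).Nonempty) :
    g '' A ⊆ A := by
  obtain ⟨u, v, huv, rfl⟩ := hL.nd A (hP.1 hA)
  obtain ⟨J, hJ, hAJ | hAJ⟩ := hP.2.2 _ hgA
  · have hJA : J = oInt u v := hP.eq_of_not_disjoint hJ hA
      (not_disjoint_iff_nonempty_inter.mpr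
        ((hg.oInt_inter_image_nonempty hgx huv hx).mono fun z hz => ⟨hAJ hz.2, hz.1⟩))
    exact hJA ▸ hAJ
  obtain ⟨W, hW, hAW, hWJ, y, hyW, hgy⟩ :
      ∃ W ∈ P, oInt u v ≠ W ∧ W ≠ J ∧ (closure W ∩ {y | g y = y}).Nonempty := by
    by_cases hJ₁ : W₁ = J
    · exact ⟨W₂, hW₂, hA₂, fun h => h12 (hJ₁.trans h.symm), hf₂⟩
    · exact ⟨W₁, hW₁, hA₁, hJ₁, hf₁⟩
  obtain ⟨a, b, hab, rfl⟩ := hL.nd W (hP.1 hW)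
  have hsub : oInt a b ⊆ oInt v u := dual_oInt huv ▸
    subset_dual_of_disjoint (isOpen_oInt a b) (hP.disjoint hW hA hAW.symm)
  have hdual : g '' oInt v u ⊆ J := by
    rwa [hg.image_oInt, ← dual_oInt (g.injective.ne huv), ← hg.image_oInt]
  rw [closure_oInt_eq_compl huv] at hx
  exact (hg.not_disjoint_image_oInt hgx hx hab hsub hyW hgy
    ((hP.disjoint hW hJ hWJ).mono_right hdual)).elim

lemma image_eq_of_fixedPt (hor : ∀ g ∈ G, OrientPres g) (hinv : GInv G L) (hL : LamSys L)
    (hP : IsGap L P) (hg : g ∈ G) (hA : A ∈ P) (hf : (closure A ∩ {x | g x = x}).Nonempty)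
    (hW₁ : W₁ ∈ P) (hW₂ : W₂ ∈ P) (h12 : W₁ ≠ W₂) (hA₁ : A ≠ W₁) (hA₂ : A ≠ W₂)
    (hf₁ : (closure W₁ ∩ {y | g y = y}).Nonempty) (hf₂ : (closure W₂ ∩ {y | g y = y}).Nonempty) :
    g '' A = A := by
  obtain ⟨x, hx, hgx⟩ := hf
  have hg' : g⁻¹ ∈ G := inv_mem hg
  refine (hP.image_subset_of_fixedPt hL (hor g hg) hA (hinv g hg A (hP.1 hA)) hx hgx hW₁ hW₂
    h12 hA₁ hA₂ hf₁ hf₂).antisymm ?_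
  rw [← g.setOf_inv_apply_eq] at hf₁ hf₂
  have hinv_sub := hP.image_subset_of_fixedPt hL (hor _ hg') hA (hinv _ hg' A (hP.1 hA)) hx
    (g.inv_apply_eq_self hgx) hW₁ hW₂ h12 hA₁ hA₂ hf₁ hf₂
  calc A = g '' (⇑(g⁻¹) '' A) := (g.image_inv_image A).symm
    _ ⊆ g '' A := image_mono hinv_sub

/-- Otherwise the two `g`-invariant sides `I₁ ≠ I₂`, being disjoint from `g '' K`, would both lie
in `dual (g '' K)` and hence in the same side. -/
lemma exists_image_subset (hL : LamSys L) (hP : IsGap L P) (hI₁ : I₁ ∈ P) (hI₂ : I₂ ∈ P)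
    (h12 : I₁ ≠ I₂) (hg₁ : g '' I₁ = I₁) (hg₂ : g '' I₂ = I₂) (hK : K ∈ P) (hK₁ : K ≠ I₁)
    (hK₂ : K ≠ I₂) (hgK : g '' K ∈ L) : ∃ J ∈ P, g '' K ⊆ J := by
  obtain ⟨J, hJ, hKJ | hKJ⟩ := hP.2.2 _ hgK
  · exact ⟨J, hJ, hKJ⟩
  have key : ∀ I ∈ P, g '' I = I → K ≠ I → I = J := fun I hI hgI hKI => by
    refine hP.eq_of_subset hL hI hJ
      ((subset_dual_of_disjoint (hL.isOpen (hP.1 hI)) ?_).trans hKJ)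
    rw [← hgI]
    exact (disjoint_image_iff g.injective).mpr (hP.disjoint hI hK hKI.symm)
  exact absurd ((key I₁ hI₁ hg₁ hK₁).trans (key I₂ hI₂ hg₂ hK₂).symm) h12

lemma image_mem (hinv : GInv G L) (hL : LamSys L) (hP : IsGap L P) (hg : g ∈ G) (hI₁ : I₁ ∈ P)
    (hI₂ : I₂ ∈ P) (h12 : I₁ ≠ I₂) (hg₁ : g '' I₁ = I₁) (hg₂ : g '' I₂ = I₂) (hK : K ∈ P) :
    g '' K ∈ P := by
  by_cases hK₁ : K = I₁
  · rwa [hK₁, hg₁]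
  by_cases hK₂ : K = I₂
  · rwa [hK₂, hg₂]
  have hg' : g⁻¹ ∈ G := inv_mem hg
  obtain ⟨J, hJ, hKJ⟩ := hP.exists_image_subset hL hI₁ hI₂ h12 hg₁ hg₂ hK hK₁ hK₂
    (hinv g hg K (hP.1 hK))
  have hJne : ∀ I ∈ P, g '' I = I → K ≠ I → J ≠ I := fun I hI hgI hKI hJI => by
    rw [hJI, ← hgI, image_subset_image_iff g.injective] at hKJ
    exact hKI (hP.eq_of_subset hL hK hI hKJ)
  have hinv₁ : ⇑(g⁻¹) '' I₁ = I₁ := by rw [← hg₁, g.inv_image_image, hg₁]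
  have hinv₂ : ⇑(g⁻¹) '' I₂ = I₂ := by rw [← hg₂, g.inv_image_image, hg₂]
  obtain ⟨J', hJ', hJJ'⟩ := hP.exists_image_subset hL hI₁ hI₂ h12 hinv₁ hinv₂ hJ
    (hJne I₁ hI₁ hg₁ hK₁) (hJne I₂ hI₂ hg₂ hK₂) (hinv _ hg' J (hP.1 hJ))
  have hKJ' : K = J' := hP.eq_of_subset hL hK hJ'
    ((g.inv_image_image K).symm.subset.trans ((image_mono hKJ).trans hJJ'))
  have hJK : J ⊆ g '' K := by
    rw [← g.image_inv_image J]
    exact image_mono (hKJ' ▸ hJJ')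
  exact hKJ.antisymm hJK ▸ hJ

end IsGap

end Gap

lemma exists_pow_image_eq {P : Set (Set Circle)} {g : Circle ≃ₜ Circle} (hP : P.Finite)
    (himg : ∀ K ∈ P, g '' K ∈ P) {K : Set Circle} (hK : K ∈ P) :
    ∃ n, 0 < n ∧ ⇑(g ^ n) '' K = K := by
  have := hP.to_subtype
  let f : P → P := fun K => ⟨g '' K, himg K K.2⟩
  have hf : Function.Injective f := fun K K' h =>
    Subtype.ext (image_injective.mpr g.injective (congrArg Subtype.val h))
  have hiter : ∀ m (K' : P), (f^[m] K' : Set Circle) = ⇑(g ^ m) '' K' := by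
    intro m
    induction m with
    | zero => exact fun K' => (image_id _).symm
    | succ m ih =>
      intro K'
      rw [Function.iterate_succ_apply', pow_succ', show ⇑(g * g ^ m) = g ∘ ⇑(g ^ m) from rfl,
        image_comp, ← ih]
  obtain ⟨n, hn, hper⟩ := hf.mem_periodicPts ⟨K, hK⟩
  exact ⟨n, hn, (hiter n _).symm.trans (congrArg Subtype.val hper)⟩

theorem stmt14_general (G : Subgroup (Circle ≃ₜ Circle)) (hor : ∀ g ∈ G, OrientPres g)
    (L : Set (Set Circle)) (hL : LamSys L) (hinv : GInv G L)
    (P : Set (Set Circle)) (hP : IsGap L P) (hfin : (vset P).Finite)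
    (g : Circle ≃ₜ Circle) (hg : g ∈ G)
    (I₁ I₂ I₃ : Set Circle) (h₁ : I₁ ∈ P) (h₂ : I₂ ∈ P) (h₃ : I₃ ∈ P)
    (h12 : I₁ ≠ I₂) (h13 : I₁ ≠ I₃) (h23 : I₂ ≠ I₃)
    (hf₁ : (closure I₁ ∩ {x | g x = x}).Nonempty)
    (hf₂ : (closure I₂ ∩ {x | g x = x}).Nonempty)
    (hf₃ : (closure I₃ ∩ {x | g x = x}).Nonempty) :
    vset P ⊆ {x | g x = x} := by
  have hI₁ : g '' I₁ = I₁ :=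
    hP.image_eq_of_fixedPt hor hinv hL hg h₁ hf₁ h₂ h₃ h23 h12 h13 hf₂ hf₃
  have hI₂ : g '' I₂ = I₂ :=
    hP.image_eq_of_fixedPt hor hinv hL hg h₂ hf₂ h₁ h₃ h13 h12.symm h23 hf₁ hf₃
  have himg : ∀ K ∈ P, g '' K ∈ P := fun K hK => hP.image_mem hinv hL hg h₁ h₂ h12 hI₁ hI₂ hK
  obtain ⟨x, -, hgx⟩ := hf₁
  intro z hz
  obtain ⟨K, hK, hzK⟩ := hP.exists_mem_closure hL hfin z
  obtain ⟨n, hn, hKn⟩ := exists_pow_image_eq (hP.finite hL hfin) himg hK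
  obtain ⟨a, b, hab, rfl⟩ := hL.nd K (hP.1 hK)
  rw [(hor _ (pow_mem hg n)).image_oInt, oInt_eq_oInt_iff ((g ^ n).injective.ne hab) hab] at hKn
  rw [closure_oInt hab] at hzK
  have hzn : (g ^ n) z = z := by
    rcases hzK with hz' | rfl | rfl
    · exact absurd ⟨_, hK, hz'⟩ hz
    · exact hKn.1
    · exact hKn.2
  exact (hor g hg).apply_eq_of_pow_apply_eq hgx hn hzn

/-- If three distinct sides of a non-leaf ideal polygon of a `G`-invariant lamination system
each have closure containing a fixed point of `g ∈ G`, then the polygon is `g`-fixed. -/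
theorem stmt14 (G : Subgroup (Circle ≃ₜ Circle)) (hor : ∀ g ∈ G, OrientPres g)
    (L : Set (Set Circle)) (hL : LamSys L) (hinv : GInv G L)
    (P : Set (Set Circle)) (hP : IsGap L P) (hfin : (vset P).Finite) (hnl : ¬ IsLeafGap P)
    (g : Circle ≃ₜ Circle) (hg : g ∈ G)
    (I₁ I₂ I₃ : Set Circle) (h₁ : I₁ ∈ P) (h₂ : I₂ ∈ P) (h₃ : I₃ ∈ P)
    (h12 : I₁ ≠ I₂) (h13 : I₁ ≠ I₃) (h23 : I₂ ≠ I₃)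
    (hf₁ : (closure I₁ ∩ {x | g x = x}).Nonempty)
    (hf₂ : (closure I₂ ∩ {x | g x = x}).Nonempty)
    (hf₃ : (closure I₃ ∩ {x | g x = x}).Nonempty) :
    vset P ⊆ {x | g x = x} :=
  stmt14_general G hor L hL hinv P hP hfin g hg I₁ I₂ I₃ h₁ h₂ h₃ h12 h13 h23 hf₁ hf₂ hf₃
end

section
/- Let G ≤ Homeo+(S^1) and L a G-invariant lamination system containing a non-leaf ideal polygon P with v_G(P) = ∪_{g∈G} v(g(P)) dense in S^1. Then G is not abelian. -/
/-!
Suppose `G` is abelian. If `x ∈ G` moves `P`, the gaps `P` and `x P` are unlinked, so some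
intervals `I, B` of `P` satisfy `x (Bᶜ) ⊆ closure I`; think of this as an arrow from `I` to `B`.
Density of `v_G(P)` provides an arrow out of every interval of `P`, and `x⁻¹` reverses arrows.
If `x` gives an arrow from `I` to `B` and `y` one from `J` to `C`, with `I ≠ J`, `B ≠ J` and
`C ≠ I`, then `x y = y x` maps the (at least three) vertices of `P` into
`closure I ∩ closure J`, which has two points. No such system of arrows exists on the at least
three intervals of a non-leaf ideal polygon.
-/

open Set Topology

open Filter

lemma Circle.re_sq_add_im_sq (z : Circle) : (z : ℂ).re ^ 2 + (z : ℂ).im ^ 2 = 1 := by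
  rw [sq, sq, ← Complex.normSq_apply, Circle.normSq_coe]

lemma Circle.coe_re_ne_one {z : Circle} (h : z ≠ 1) : (z : ℂ).re ≠ 1 := by
  intro hre
  have him : (z : ℂ).im = 0 := by nlinarith [Circle.re_sq_add_im_sq z]
  exact h (Circle.ext (Complex.ext (by simpa using hre) (by simpa using him)))

lemma Circle.tendsto_one_of_tendsto_re {ι : Type*} {l : Filter ι} {f : ι → Circle}
    (h : Tendsto (fun i => (f i : ℂ).re) l (𝓝 1)) : Tendsto f l (𝓝 1) := by
  have hnorm : ∀ z : Circle, ‖(z : ℂ) - 1‖ = √(2 - 2 * (z : ℂ).re) := fun z => by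
    rw [Complex.norm_def, Complex.normSq_apply]
    congr 1
    simp only [Complex.sub_re, Complex.one_re, Complex.sub_im, Complex.one_im, sub_zero]
    nlinarith [Circle.re_sq_add_im_sq z]
  refine tendsto_subtype_rng.2 (tendsto_iff_norm_sub_tendsto_zero.2 ?_)
  simp only [hnorm, Circle.coe_one]
  have hcont : Continuous fun r : ℝ => √(2 - 2 * r) := by fun_prop
  simpa [Function.comp_def] using (hcont.tendsto 1).comp h

lemma frontier_eq_of_compl_eq_union {X : Type*} [TopologicalSpace X] {I W : Set X} {u v : X}
    (hI : IsOpen I) (hW : IsOpen W) (hc : Iᶜ = W ∪ {u, v}) (hu : u ∈ closure I)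
    (hv : v ∈ closure I) : frontier I = {u, v} := by
  have hWI : W ⊆ Iᶜ := hc ▸ subset_union_left
  have huv : {u, v} ⊆ Iᶜ := hc ▸ subset_union_right
  rw [hI.frontier_eq]
  refine subset_antisymm (fun p hp => ?_) ?_
  · obtain ⟨hpcl, hpI⟩ := hp
    rcases (hc ▸ hpI : p ∈ W ∪ {u, v}) with hpW | hp
    · obtain ⟨q, hqW, hqI⟩ := mem_closure_iff.1 hpcl W hW hpW
      exact absurd hqI (hWI hqW)
    · exact hp
  · rintro p (rfl | rfl)
    · exact ⟨hu, huv (Or.inl rfl)⟩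
    · exact ⟨hv, huv (Or.inr rfl)⟩

lemma compl_eq_closure_interior_of_compl_eq_union {X : Type*} [TopologicalSpace X]
    {I W : Set X} {u v : X} (hI : IsOpen I) (hW : IsOpen W) (hc : Iᶜ = W ∪ {u, v})
    (hu : u ∈ closure W) (hv : v ∈ closure W) : Iᶜ = closure (interior Iᶜ) := by
  refine subset_antisymm ?_ ?_
  · have hW' : closure W ⊆ closure (interior Iᶜ) :=
      closure_mono (hW.subset_interior_iff.2 (hc ▸ subset_union_left))
    calc Iᶜ = W ∪ {u, v} := hc
      _ ⊆ closure (interior Iᶜ) := union_subset (subset_closure.trans hW')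
          (insert_subset (hW' hu) (singleton_subset_iff.2 (hW' hv)))
  · exact (closure_mono interior_subset).trans hI.isClosed_compl.closure_subset

lemma eq_Iio_of_ordConnected {α : Type*} [LinearOrder α] [DenselyOrdered α] [NoMinOrder α]
    {S : Set α} {c : α} (hS : S.OrdConnected) (hSc : S ⊆ Iio c) (hfin : (Iio c \ S).Finite) :
    S = Iio c := by
  refine subset_antisymm hSc fun s hsc => ?_
  by_contra hsS
  by_cases hlt : ∃ o ∈ S, o < s
  · by_cases hgt : ∃ o ∈ S, s < o
    · obtain ⟨o₁, ho₁, ho₁s⟩ := hlt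
      obtain ⟨o₂, ho₂, hso₂⟩ := hgt
      exact hsS (hS.out ho₁ ho₂ ⟨ho₁s.le, hso₂.le⟩)
    · push Not at hgt
      refine Ioo_infinite hsc (hfin.subset fun q hq => ⟨hq.2, fun hqS => ?_⟩)
      exact (hgt q hqS).not_gt hq.1
  · push Not at hlt
    refine Iio_infinite s (hfin.subset fun q hqs => ⟨mem_Iio.2 (hqs.trans hsc), fun hqS => ?_⟩)
    exact (hlt q hqS).not_gt hqs

lemma Homeomorph.symm_image_compl_subset_closure {X Y : Type*} [TopologicalSpace X]
    [TopologicalSpace Y] (x : X ≃ₜ Y) {B : Set X} {I : Set Y} (hI : Iᶜ = closure (interior Iᶜ))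
    (h : x '' Bᶜ ⊆ closure I) : x.symm '' Iᶜ ⊆ closure B := by
  rw [x.image_compl, compl_subset_comm, ← interior_compl] at h
  calc x.symm '' Iᶜ = closure (x.symm '' interior Iᶜ) := by rw [← x.symm.image_closure, ← hI]
    _ ⊆ closure B := closure_mono ((image_mono h).trans (x.symm_image_image B).subset)

lemma false_of_linked {α : Type*} {S : Set α} (R : α → α → Prop)
    (hsymm : ∀ a ∈ S, ∀ b ∈ S, R a b → R b a) (hsucc : ∀ a ∈ S, ∃ b ∈ S, R a b)
    (hlink : ∀ a ∈ S, ∀ b ∈ S, ∀ c ∈ S, ∀ d ∈ S, R a b → R c d → a ≠ c → b = c ∨ d = a)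
    {a₁ a₂ a₃ : α} (h₁ : a₁ ∈ S) (h₂ : a₂ ∈ S) (h₃ : a₃ ∈ S) (h₁₂ : a₁ ≠ a₂) (h₁₃ : a₁ ≠ a₃)
    (h₂₃ : a₂ ≠ a₃) : False := by
  obtain ⟨a, ha, b, hb, hab, hR⟩ : ∃ a ∈ S, ∃ b ∈ S, a ≠ b ∧ R a b := by
    obtain ⟨b, hb, hR⟩ := hsucc a₁ h₁
    by_cases hb₁ : b = a₁
    · obtain ⟨d, hd, hRd⟩ := hsucc a₂ h₂
      have hd₁ := (hlink a₁ h₁ b hb a₂ h₂ d hd hR hRd h₁₂).resolve_left (hb₁ ▸ h₁₂)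
      exact ⟨a₂, h₂, d, hd, hd₁ ▸ h₁₂.symm, hRd⟩
    · exact ⟨a₁, h₁, b, hb, Ne.symm hb₁, hR⟩
  obtain ⟨c, hc, hac, hbc⟩ : ∃ c ∈ S, a ≠ c ∧ b ≠ c := by
    by_contra! h
    have h' : ∀ c ∈ S, c = a ∨ c = b := fun c hc =>
      (eq_or_ne a c).imp Eq.symm fun hac => (h c hc hac).symm
    rcases h' a₁ h₁ with rfl | rfl <;> rcases h' a₂ h₂ with rfl | rfl <;>
      rcases h' a₃ h₃ with rfl | rfl <;> contradiction
  obtain ⟨d, hd, hRd⟩ := hsucc c hc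
  have hda := (hlink a ha b hb c hc d hd hR hRd hac).resolve_left hbc
  have hdb := (hlink b hb a ha c hc d hd (hsymm a ha b hb hR) hRd hbc).resolve_left hac
  exact hab (hda.symm.trans hdb)

namespace CircleArc

noncomputable def stereoInv (t : ℝ) : Circle :=
  ⟨⟨(t ^ 2 - 1) / (t ^ 2 + 1), -(2 * t) / (t ^ 2 + 1)⟩, by
    have h : t ^ 2 + 1 ≠ 0 := by positivity
    rw [Submonoid.unitSphere, Submonoid.mem_mk, Subsemigroup.mem_mk, mem_sphere_zero_iff_norm,
      Complex.norm_def, Complex.normSq_mk, Real.sqrt_eq_one]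
    field_simp
    ring⟩

@[simp] lemma stereoInv_re (t : ℝ) : (stereoInv t : ℂ).re = (t ^ 2 - 1) / (t ^ 2 + 1) := rfl

@[simp] lemma stereoInv_im (t : ℝ) : (stereoInv t : ℂ).im = -(2 * t) / (t ^ 2 + 1) := rfl

lemma stereoInv_ne_one (t : ℝ) : stereoInv t ≠ 1 := by
  intro h1
  have : (stereoInv t : ℂ).re = 1 := by rw [h1]; rfl
  rw [stereoInv_re, div_eq_one_iff_eq (by positivity)] at this
  linarith

@[simp] lemma sproj_stereoInv (t : ℝ) : sproj (stereoInv t) = t := by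
  have h : t ^ 2 + 1 ≠ 0 := by positivity
  have h' : (t ^ 2 - 1) / (t ^ 2 + 1) - 1 ≠ 0 := by
    rw [div_sub_one h]; exact div_ne_zero (by ring_nf; norm_num) h
  rw [sproj, stereoInv_re, stereoInv_im, div_eq_iff h']
  field_simp
  ring

lemma stereoInv_injective : Function.Injective stereoInv := fun _ _ h => by
  simpa using congrArg sproj h

lemma stereoInv_sproj {z : Circle} (h : z ≠ 1) : stereoInv (sproj z) = z := by
  have hre : (z : ℂ).re - 1 ≠ 0 := sub_ne_zero.2 (Circle.coe_re_ne_one h)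
  have hn := Circle.re_sq_add_im_sq z
  have hden : sproj z ^ 2 + 1 = 2 * (1 - (z : ℂ).re) / ((z : ℂ).re - 1) ^ 2 := by
    rw [sproj]; field_simp; nlinarith
  have hre' : 1 - (z : ℂ).re ≠ 0 := fun h0 => hre (by linarith)
  apply Circle.ext
  apply Complex.ext
  · rw [stereoInv_re, hden, sproj]; field_simp; nlinarith
  · rw [stereoInv_im, hden, sproj]; field_simp; nlinarith

lemma sproj_injOn : Set.InjOn sproj {z | z ≠ 1} := fun z hz w hw h => by
  rw [← stereoInv_sproj hz, ← stereoInv_sproj hw, h]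

lemma continuous_stereoInv : Continuous stereoInv := by
  have hpos : ∀ t : ℝ, t ^ 2 + 1 ≠ 0 := fun t => by positivity
  have h : (fun t => (stereoInv t : ℂ)) = fun t =>
      (((t ^ 2 - 1) / (t ^ 2 + 1) : ℝ) : ℂ) + ((-(2 * t) / (t ^ 2 + 1) : ℝ) : ℂ) * Complex.I :=
    funext fun t => (Complex.re_add_im _).symm
  refine continuous_induced_rng.2 ?_
  change Continuous fun t => (stereoInv t : ℂ)
  rw [h]
  have h1 : Continuous fun t : ℝ => (t ^ 2 - 1) / (t ^ 2 + 1) := by fun_prop (disch := exact hpos _)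
  have h2 : Continuous fun t : ℝ => -(2 * t) / (t ^ 2 + 1) := by fun_prop (disch := exact hpos _)
  fun_prop

lemma continuousOn_sproj : ContinuousOn sproj {z : Circle | z ≠ 1} := by
  refine ContinuousOn.div (by fun_prop) (by fun_prop) fun z hz => ?_
  exact sub_ne_zero.2 (Circle.coe_re_ne_one hz)

lemma tendsto_stereoInv_cocompact : Tendsto stereoInv (cocompact ℝ) (𝓝 1) := by
  refine Circle.tendsto_one_of_tendsto_re ?_
  have hsq : Tendsto (fun t : ℝ => t ^ 2 + 1) (cocompact ℝ) atTop := by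
    refine tendsto_atTop_add_const_right _ 1 ?_
    refine ((tendsto_pow_atTop two_ne_zero).comp (tendsto_norm_cocompact_atTop (E := ℝ))).congr
      fun t => ?_
    simp [Real.norm_eq_abs, sq_abs]
  have h2 : Tendsto (fun t : ℝ => 1 - 2 / (t ^ 2 + 1)) (cocompact ℝ) (𝓝 (1 - 0)) :=
    tendsto_const_nhds.sub (tendsto_const_nhds.div_atTop hsq)
  rw [sub_zero] at h2
  refine h2.congr fun t => ?_
  have : t ^ 2 + 1 ≠ 0 := by positivity
  rw [stereoInv_re]
  field_simp
  ring

variable {u v : Circle}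

noncomputable def arcParam (u : Circle) (t : ℝ) : Circle := u * stereoInv t

lemma arcParam_ne (u : Circle) (t : ℝ) : arcParam u t ≠ u := fun h =>
  stereoInv_ne_one t (mul_eq_left.1 h)

@[simp] lemma sproj_inv_mul_arcParam (u : Circle) (t : ℝ) : sproj (u⁻¹ * arcParam u t) = t := by
  rw [arcParam, inv_mul_cancel_left, sproj_stereoInv]

lemma continuous_arcParam (u : Circle) : Continuous (arcParam u) :=
  continuous_const.mul continuous_stereoInv

lemma arcParam_injective (u : Circle) : Function.Injective (arcParam u) := fun _ _ h =>
  stereoInv_injective (mul_left_cancel h)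

lemma inv_mul_ne_one {p : Circle} (hp : p ≠ u) : u⁻¹ * p ≠ 1 := fun h =>
  hp (inv_mul_eq_one.1 h).symm

lemma arcParam_sproj {p : Circle} (hp : p ≠ u) : arcParam u (sproj (u⁻¹ * p)) = p := by
  rw [arcParam, stereoInv_sproj (inv_mul_ne_one hp), mul_inv_cancel_left]

lemma image_arcParam (u : Circle) (s : Set ℝ) :
    arcParam u '' s = {p | p ≠ u ∧ sproj (u⁻¹ * p) ∈ s} := by
  ext p
  constructor
  · rintro ⟨t, ht, rfl⟩
    exact ⟨arcParam_ne u t, by rwa [sproj_inv_mul_arcParam]⟩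
  · rintro ⟨hpu, hp⟩
    exact ⟨_, hp, arcParam_sproj hpu⟩

lemma isOpen_image_arcParam (u : Circle) {s : Set ℝ} (hs : IsOpen s) :
    IsOpen (arcParam u '' s) := by
  have h : arcParam u '' s = (u⁻¹ * ·) ⁻¹' ({z : Circle | z ≠ 1} ∩ sproj ⁻¹' s) := by
    rw [image_arcParam]
    ext p
    simp only [mem_ofPred_eq, mem_preimage, mem_inter_iff, ne_eq, inv_mul_eq_one, eq_comm]
  rw [h]
  exact (continuousOn_sproj.isOpen_inter_preimage isOpen_ne hs).preimage (by fun_prop)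

lemma self_mem_closure_image_arcParam (u : Circle) {s : Set ℝ}
    (hs : ∃ᶠ t in cocompact ℝ, t ∈ s) : u ∈ closure (arcParam u '' s) := by
  have h : Tendsto (arcParam u) (cocompact ℝ) (𝓝 (u * 1)) :=
    ((continuous_const_mul u).tendsto 1).comp tendsto_stereoInv_cocompact
  rw [mul_one] at h
  exact mem_closure_of_frequently_of_tendsto (hs.mono fun t ht => mem_image_of_mem _ ht) h

lemma arcParam_mem_closure_image {s : Set ℝ} {t : ℝ} (ht : t ∈ closure s) :
    arcParam u t ∈ closure (arcParam u '' s) :=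
  mem_closure_image (continuous_arcParam u).continuousAt ht

lemma oInt_eq_image (huv : u ≠ v) : oInt u v = arcParam u '' Iio (sproj (u⁻¹ * v)) := by
  rw [image_arcParam]
  ext p
  simp only [oInt, posOri, mem_ofPred_eq, mem_Iio]
  constructor
  · rintro ⟨hup, -, -, h⟩
    exact ⟨Ne.symm hup, h⟩
  · rintro ⟨hpu, h⟩
    exact ⟨Ne.symm hpu, by rintro rfl; exact lt_irrefl _ h, huv.symm, h⟩

lemma compl_oInt (huv : u ≠ v) :
    (oInt u v)ᶜ = arcParam u '' Ioi (sproj (u⁻¹ * v)) ∪ {u, v} := by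
  ext p
  rw [mem_compl_iff, oInt_eq_image huv, image_arcParam, image_arcParam]
  simp only [mem_ofPred_eq, mem_union, mem_insert_iff, mem_singleton_iff, mem_Iio, mem_Ioi]
  by_cases hpu : p = u
  · simp [hpu]
  have hpv : p = v ↔ sproj (u⁻¹ * p) = sproj (u⁻¹ * v) :=
    ⟨fun h => h ▸ rfl, fun h => mul_left_cancel (sproj_injOn (inv_mul_ne_one hpu)
      (inv_mul_ne_one huv.symm) h)⟩
  simp only [hpv, ne_eq, hpu, not_false_eq_true, true_and, false_or, not_lt]
  exact le_iff_lt_or_eq.trans (or_congr Iff.rfl eq_comm)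

lemma isOpen_oInt (huv : u ≠ v) : IsOpen (oInt u v) :=
  oInt_eq_image huv ▸ isOpen_image_arcParam u isOpen_Iio

lemma frontier_oInt (huv : u ≠ v) : frontier (oInt u v) = {u, v} := by
  refine frontier_eq_of_compl_eq_union (isOpen_oInt huv) (isOpen_image_arcParam u isOpen_Ioi)
    (compl_oInt huv) ?_ ?_ <;> rw [oInt_eq_image huv]
  · exact self_mem_closure_image_arcParam u
      ((eventually_lt_atBot _).frequently.filter_mono atBot_le_cocompact)
  · have h := arcParam_mem_closure_image (u := u) (closure_Iio (sproj (u⁻¹ * v)) ▸ self_mem_Iic)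
    rwa [arcParam_sproj huv.symm] at h

lemma compl_oInt_eq_closure_dual (huv : u ≠ v) : (oInt u v)ᶜ = closure (dual (oInt u v)) := by
  refine compl_eq_closure_interior_of_compl_eq_union (isOpen_oInt huv)
    (isOpen_image_arcParam u isOpen_Ioi) (compl_oInt huv) ?_ ?_
  · exact self_mem_closure_image_arcParam u
      ((eventually_gt_atTop _).frequently.filter_mono atTop_le_cocompact)
  · have h := arcParam_mem_closure_image (u := u) (closure_Ioi (sproj (u⁻¹ * v)) ▸ self_mem_Ici)
    rwa [arcParam_sproj huv.symm] at h

end CircleArc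

open CircleArc

namespace IsND

variable {I J K : Set Circle}

lemma isOpen (hI : IsND I) : IsOpen I := by
  obtain ⟨u, v, huv, rfl⟩ := hI
  exact isOpen_oInt huv

lemma nonempty (hI : IsND I) : I.Nonempty := by
  obtain ⟨u, v, huv, rfl⟩ := hI
  exact oInt_eq_image huv ▸ nonempty_Iio.image _

lemma infinite (hI : IsND I) : I.Infinite := by
  obtain ⟨u, v, huv, rfl⟩ := hI
  exact oInt_eq_image huv ▸ (Iio_infinite _).image (arcParam_injective u).injOn

lemma isPreconnected (hI : IsND I) : IsPreconnected I := by
  obtain ⟨u, v, huv, rfl⟩ := hI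
  exact oInt_eq_image huv ▸ isPreconnected_Iio.image _ (continuous_arcParam u).continuousOn

lemma compl_eq_closure_dual (hI : IsND I) : Iᶜ = closure (dual I) := by
  obtain ⟨u, v, huv, rfl⟩ := hI
  exact compl_oInt_eq_closure_dual huv

lemma encard_frontier (hI : IsND I) : (frontier I).encard = 2 := by
  obtain ⟨u, v, huv, rfl⟩ := hI
  rw [frontier_oInt huv, encard_pair huv]

lemma eq_or_eq_or_eq_of_frontier_eq (hI : IsND I) (hJ : IsND J) (hK : IsND K)
    (hIJ : frontier I = frontier J) (hIK : frontier I = frontier K) : I = J ∨ I = K ∨ J = K := by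
  obtain ⟨a, b, hab, rfl⟩ := hI
  obtain ⟨c, d, hcd, rfl⟩ := hJ
  obtain ⟨e, f, hef, rfl⟩ := hK
  rw [frontier_oInt hab, frontier_oInt hcd, pair_eq_pair_iff] at hIJ
  rw [frontier_oInt hab, frontier_oInt hef, pair_eq_pair_iff] at hIK
  rcases hIJ with ⟨rfl, rfl⟩ | ⟨rfl, rfl⟩ <;> rcases hIK with ⟨rfl, rfl⟩ | ⟨rfl, rfl⟩ <;> simp

-- Removing a point disconnects an interval.
lemma eq_of_subset_of_finite_diff (hJ : IsND J) (hK : IsND K) (hJK : J ⊆ K)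
    (hfin : (K \ J).Finite) : J = K := by
  obtain ⟨a, b, hab, rfl⟩ := hK
  rw [oInt_eq_image hab] at hJK hfin ⊢
  set O := arcParam a ⁻¹' J
  have hJO : J = arcParam a '' O :=
    (image_preimage_eq_of_subset (hJK.trans (image_subset_range _ _))).symm
  have hOc : O ⊆ Iio (sproj (a⁻¹ * b)) := fun t ht => by
    obtain ⟨s, hs, hst⟩ := hJK ht
    exact arcParam_injective a hst ▸ hs
  have hOconn : IsPreconnected O := by
    have hO : O = (fun p => sproj (a⁻¹ * p)) '' J := by
      rw [hJO, image_image]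
      simp only [sproj_inv_mul_arcParam, image_id']
    rw [hO]
    refine hJ.isPreconnected.image _
      (continuousOn_sproj.comp (continuous_const_mul a⁻¹).continuousOn ?_)
    intro p hp
    obtain ⟨t, -, rfl⟩ := hJK hp
    exact inv_mul_ne_one (arcParam_ne a t)
  have hOfin : (Iio (sproj (a⁻¹ * b)) \ O).Finite := by
    refine (hfin.preimage (arcParam_injective a).injOn).subset fun t ⟨htc, htO⟩ => ⟨?_, htO⟩
    exact mem_image_of_mem _ htc
  rw [hJO, eq_Iio_of_ordConnected hOconn.ordConnected hOc hOfin]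

end IsND

lemma vset_subset_compl_of_mem {P : Set (Set Circle)} {I : Set Circle} (hI : I ∈ P) :
    vset P ⊆ Iᶜ :=
  fun _ hp hpI => hp ⟨I, hI, hpI⟩

namespace IsGap

variable {L P Q : Set (Set Circle)} {I J : Set Circle}

lemma isND (hP : IsGap L P) (hL : LamSys L) (hI : I ∈ P) : IsND I :=
  hL.nd I (hP.1 hI)

lemma disjoint_closure (hP : IsGap L P) (hL : LamSys L) (hI : I ∈ P) (hJ : J ∈ P) (hIJ : I ≠ J) :
    Disjoint I (closure J) :=
  (disjoint_iff_inter_eq_empty.2 (hP.2.1 I hI J hJ hIJ)).closure_right (hP.isND hL hI).isOpen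

lemma frontier_subset_vset (hP : IsGap L P) (hL : LamSys L) (hI : I ∈ P) :
    frontier I ⊆ vset P := by
  rintro p hp ⟨J, hJ, hpJ⟩
  rw [(hP.isND hL hI).isOpen.frontier_eq] at hp
  obtain rfl | hJI := eq_or_ne J I
  · exact hp.2 hpJ
  · exact (hP.disjoint_closure hL hJ hI hJI).notMem_of_mem_left hpJ hp.1

lemma closure_inter_closure_subset_frontier (hP : IsGap L P) (hL : LamSys L) (hI : I ∈ P)
    (hJ : J ∈ P) (hIJ : I ≠ J) : closure I ∩ closure J ⊆ frontier I := fun _ ⟨hpI, hpJ⟩ =>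
  (hP.isND hL hI).isOpen.frontier_eq ▸
    ⟨hpI, fun hp => (hP.disjoint_closure hL hI hJ hIJ).notMem_of_mem_left hp hpJ⟩

lemma subset_of_forall_exists_subset (hP : IsGap L P) (hL : LamSys L)
    (hPQ : ∀ I ∈ P, ∃ J ∈ Q, I ⊆ J) (hQP : ∀ J ∈ Q, ∃ I ∈ P, J ⊆ I) : P ⊆ Q := by
  intro I hI
  obtain ⟨J, hJ, hIJ⟩ := hPQ I hI
  obtain ⟨I', hI', hJI'⟩ := hQP J hJ
  obtain ⟨p, hp⟩ := (hP.isND hL hI).nonempty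
  obtain rfl : I = I' := by
    by_contra h
    exact (hP.2.1 I hI I' hI' h).subset ⟨hp, hJI' (hIJ hp)⟩
  exact subset_antisymm hIJ hJI' ▸ hJ

lemma eq_or_exists_compl_subset_closure (hP : IsGap L P) (hQ : IsGap L Q) (hL : LamSys L) :
    P = Q ∨ ∃ I ∈ P, ∃ J ∈ Q, Jᶜ ⊆ closure I := by
  by_cases h₁ : ∃ I ∈ P, ∃ J ∈ Q, dual I ⊆ J
  · obtain ⟨I, hI, J, hJ, hIJ⟩ := h₁
    refine Or.inr ⟨I, hI, J, hJ, ?_⟩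
    rwa [compl_subset_comm, ← interior_compl]
  by_cases h₂ : ∃ J ∈ Q, ∃ I ∈ P, dual J ⊆ I
  · obtain ⟨J, hJ, I, hI, hJI⟩ := h₂
    exact Or.inr ⟨I, hI, J, hJ, (hQ.isND hL hJ).compl_eq_closure_dual ▸ closure_mono hJI⟩
  push Not at h₁ h₂
  have hPQ : ∀ I ∈ P, ∃ J ∈ Q, I ⊆ J := fun I hI => by
    obtain ⟨J, hJ, hIJ | hIJ⟩ := hQ.2.2 I (hP.1 hI)
    exacts [⟨J, hJ, hIJ⟩, absurd hIJ (h₁ I hI J hJ)]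
  have hQP : ∀ J ∈ Q, ∃ I ∈ P, J ⊆ I := fun J hJ => by
    obtain ⟨I, hI, hJI | hJI⟩ := hP.2.2 J (hQ.1 hJ)
    exacts [⟨I, hI, hJI⟩, absurd hJI (h₂ J hJ I hI)]
  exact Or.inl (subset_antisymm (hP.subset_of_forall_exists_subset hL hPQ hQP)
    (hQ.subset_of_forall_exists_subset hL hQP hPQ))

lemma eq_leafOf_of_eq_pair (hP : IsGap L P) (hL : LamSys L) (hfin : (vset P).Finite)
    (hIJ : I ≠ J) (hPIJ : P = {I, J}) : P = leafOf I := by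
  have hI : I ∈ P := hPIJ ▸ mem_insert I {J}
  have hJ : J ∈ P := hPIJ ▸ mem_insert_of_mem I rfl
  have hJdual : J ⊆ dual I := by
    rw [dual, interior_compl]
    exact (hP.disjoint_closure hL hJ hI hIJ.symm).subset_compl_right
  have hdiff : dual I \ J ⊆ vset P := by
    rintro p ⟨hpI, hpJ⟩ ⟨K, hK, hpK⟩
    rw [hPIJ] at hK
    rcases hK with rfl | rfl
    · exact interior_subset hpI hpK
    · exact hpJ hpK
  rw [hPIJ, leafOf, (hP.isND hL hJ).eq_of_subset_of_finite_diff
    (hL.nd _ (hL.dualMem I (hP.1 hI))) hJdual (hfin.subset hdiff)]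

lemma exists_three (hP : IsGap L P) (hL : LamSys L) (hfin : (vset P).Finite)
    (hnl : ¬ IsLeafGap P) :
    ∃ I₁ ∈ P, ∃ I₂ ∈ P, ∃ I₃ ∈ P, I₁ ≠ I₂ ∧ I₁ ≠ I₃ ∧ I₂ ≠ I₃ := by
  obtain ⟨K, hK⟩ := hL.nonempty
  obtain ⟨I₁, hI₁, -⟩ := hP.2.2 K hK
  obtain ⟨I₂, hI₂, h₁₂⟩ : ∃ I₂ ∈ P, I₁ ≠ I₂ := by
    by_contra! h
    refine (hL.nd _ (hL.dualMem I₁ (hP.1 hI₁))).infinite (hfin.subset ?_)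
    rintro p hp ⟨J, hJ, hpJ⟩
    exact interior_subset hp (h J hJ ▸ hpJ)
  obtain ⟨I₃, hI₃, h₁₃, h₂₃⟩ : ∃ I₃ ∈ P, I₁ ≠ I₃ ∧ I₂ ≠ I₃ := by
    by_contra! h
    refine hnl ⟨I₁, hP.eq_leafOf_of_eq_pair hL hfin h₁₂ (subset_antisymm (fun J hJ => ?_) ?_)⟩
    · obtain rfl | h₁J := eq_or_ne I₁ J
      exacts [mem_insert _ _, mem_insert_of_mem _ (h J hJ h₁J).symm]
    · exact insert_subset hI₁ (singleton_subset_iff.2 hI₂)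
  exact ⟨I₁, hI₁, I₂, hI₂, I₃, hI₃, h₁₂, h₁₃, h₂₃⟩

lemma two_lt_encard_vset (hP : IsGap L P) (hL : LamSys L) (hfin : (vset P).Finite)
    (hnl : ¬ IsLeafGap P) : 2 < (vset P).encard := by
  obtain ⟨I₁, h₁, I₂, h₂, I₃, h₃, h₁₂, h₁₃, h₂₃⟩ := hP.exists_three hL hfin hnl
  by_contra! hV
  have hfr : ∀ I ∈ P, frontier I = vset P := fun I hI =>
    (hfin.subset (hP.frontier_subset_vset hL hI)).eq_of_subset_of_encard_le
      (hP.frontier_subset_vset hL hI) (hV.trans (hP.isND hL hI).encard_frontier.ge)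
  rcases IsND.eq_or_eq_or_eq_of_frontier_eq (hP.isND hL h₁) (hP.isND hL h₂) (hP.isND hL h₃)
    ((hfr I₁ h₁).trans (hfr I₂ h₂).symm) ((hfr I₁ h₁).trans (hfr I₃ h₃).symm) with h | h | h
  exacts [h₁₂ h, h₁₃ h, h₂₃ h]

lemma not_image_vset_subset_closure_inter (hP : IsGap L P) (hL : LamSys L)
    (hV : 2 < (vset P).encard) {f : Circle → Circle} (hf : Function.Injective f) (hI : I ∈ P)
    (hJ : J ∈ P) (hIJ : I ≠ J) : ¬ f '' vset P ⊆ closure I ∩ closure J := fun h => by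
  have := encard_le_encard (h.trans (hP.closure_inter_closure_subset_frontier hL hI hJ hIJ))
  rw [hf.injOn.encard_image, (hP.isND hL hI).encard_frontier] at this
  exact hV.not_ge this

end IsGap

section Action

variable {G : Subgroup (Circle ≃ₜ Circle)} {L P : Set (Set Circle)} {x : Circle ≃ₜ Circle}

lemma vset_gapIm (x : Circle ≃ₜ Circle) (P : Set (Set Circle)) :
    vset (gapIm x P) = x '' vset P := by
  rw [vset, vset, gapIm, ← image_sUnion, x.image_compl]

lemma isGap_gapIm (hinv : GInv G L) (hP : IsGap L P) (hx : x ∈ G) : IsGap L (gapIm x P) := by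
  refine ⟨?_, ?_, fun K hK => ?_⟩
  · rintro _ ⟨I, hI, rfl⟩
    exact hinv x hx I (hP.1 hI)
  · rintro _ ⟨I, hI, rfl⟩ _ ⟨J, hJ, rfl⟩ hne
    rw [← image_inter x.injective, hP.2.1 I hI J hJ (fun h => hne (h ▸ rfl)), image_empty]
  · obtain ⟨J, hJ, hKJ⟩ := hP.2.2 (x.symm '' K) (hinv x⁻¹ (inv_mem hx) K hK)
    refine ⟨x '' J, ⟨J, hJ, rfl⟩, ?_⟩
    have hback : ∀ S, x.symm '' S ⊆ J → S ⊆ x '' J := fun S h =>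
      (x.image_symm_image S).symm.subset.trans (image_mono h)
    rcases hKJ with h | h
    · exact Or.inl (hback K h)
    · rw [dual, ← x.symm.image_compl, ← x.symm.image_interior] at h
      exact Or.inr (hback _ h)

lemma exists_image_compl_subset_closure (hL : LamSys L) (hinv : GInv G L) (hP : IsGap L P)
    (hx : x ∈ G) (hne : gapIm x P ≠ P) : ∃ I ∈ P, ∃ B ∈ P, x '' Bᶜ ⊆ closure I := by
  rcases hP.eq_or_exists_compl_subset_closure (isGap_gapIm hinv hP hx) hL with h | h
  · exact absurd h.symm hne
  · obtain ⟨I, hI, _, ⟨B, hB, rfl⟩, hBI⟩ := h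
    exact ⟨I, hI, B, hB, x.image_compl B ▸ hBI⟩

def MapsComplInto (G : Subgroup (Circle ≃ₜ Circle)) (B I : Set Circle) : Prop :=
  ∃ x ∈ G, ⇑x '' Bᶜ ⊆ closure I

lemma MapsComplInto.symm {B I : Set Circle} (hI : IsND I) (h : MapsComplInto G B I) :
    MapsComplInto G I B := by
  obtain ⟨x, hx, hBI⟩ := h
  exact ⟨x⁻¹, inv_mem hx, x.symm_image_compl_subset_closure hI.compl_eq_closure_dual hBI⟩

lemma exists_mapsComplInto (hL : LamSys L) (hinv : GInv G L) (hP : IsGap L P)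
    (hdense : Dense (vOrb G P)) {I : Set Circle} (hI : I ∈ P) : ∃ B ∈ P, MapsComplInto G B I := by
  obtain ⟨p, hpv, hpI⟩ := hdense.exists_mem_open (hP.isND hL hI).isOpen (hP.isND hL hI).nonempty
  simp only [vOrb, mem_iUnion] at hpv
  obtain ⟨x, hx, hpx⟩ := hpv
  have hne : gapIm x P ≠ P := fun h => vset_subset_compl_of_mem hI (h ▸ hpx) hpI
  rw [vset_gapIm] at hpx
  obtain ⟨I', hI', B, hB, hBI'⟩ := exists_image_compl_subset_closure hL hinv hP hx hne
  obtain rfl : I = I' := by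
    by_contra h
    exact (hP.disjoint_closure hL hI hI' h).notMem_of_mem_left hpI
      (hBI' (image_mono (vset_subset_compl_of_mem hB) hpx))
  exact ⟨B, hB, x, hx, hBI'⟩

lemma image_mul_vset_subset_closure (hP : IsGap L P) (hL : LamSys L) {B C I J : Set Circle}
    (hB : B ∈ P) (hC : C ∈ P) (hJ : J ∈ P) (hBJ : B ≠ J) {x y : Circle ≃ₜ Circle}
    (hx : x '' Bᶜ ⊆ closure I) (hy : y '' Cᶜ ⊆ closure J) : ⇑(x * y) '' vset P ⊆ closure I :=
  calc ⇑(x * y) '' vset P = x '' (y '' vset P) := image_comp x y _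
    _ ⊆ x '' closure J := image_mono ((image_mono (vset_subset_compl_of_mem hC)).trans hy)
    _ ⊆ x '' Bᶜ := image_mono (hP.disjoint_closure hL hB hJ hBJ).subset_compl_left
    _ ⊆ closure I := hx

lemma MapsComplInto.eq_or_eq (hP : IsGap L P) (hL : LamSys L) (hV : 2 < (vset P).encard)
    (hcomm : ∀ a ∈ G, ∀ b ∈ G, a * b = b * a) {B C I J : Set Circle} (hB : B ∈ P) (hC : C ∈ P)
    (hI : I ∈ P) (hJ : J ∈ P) (hBI : MapsComplInto G B I) (hCJ : MapsComplInto G C J)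
    (hIJ : I ≠ J) : B = J ∨ C = I := by
  obtain ⟨x, hx, hxBI⟩ := hBI
  obtain ⟨y, hy, hyCJ⟩ := hCJ
  by_contra! h
  refine hP.not_image_vset_subset_closure_inter hL hV (x * y).injective hI hJ hIJ
    (subset_inter ?_ ?_)
  · exact image_mul_vset_subset_closure hP hL hB hC hJ h.1 hxBI hyCJ
  · exact hcomm x hx y hy ▸ image_mul_vset_subset_closure hP hL hC hB hI h.2 hyCJ hxBI

end Action

theorem stmt17_general (G : Subgroup (Circle ≃ₜ Circle))
    (L : Set (Set Circle)) (hL : LamSys L) (hinv : GInv G L)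
    (P : Set (Set Circle)) (hP : IsGap L P) (hfin : (vset P).Finite) (hnl : ¬ IsLeafGap P)
    (hdense : Dense (vOrb G P)) :
    ¬ ∀ a ∈ G, ∀ b ∈ G, a * b = b * a := by
  intro hcomm
  obtain ⟨I₁, h₁, I₂, h₂, I₃, h₃, h₁₂, h₁₃, h₂₃⟩ := hP.exists_three hL hfin hnl
  have hV := hP.two_lt_encard_vset hL hfin hnl
  exact false_of_linked (S := P) (fun I B => MapsComplInto G B I)
    (fun I hI _ _ h => h.symm (hP.isND hL hI))
    (fun _ hI => exists_mapsComplInto hL hinv hP hdense hI)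
    (fun _ hI _ hB _ hJ _ hC => MapsComplInto.eq_or_eq hP hL hV hcomm hB hC hI hJ)
    h₁ h₂ h₃ h₁₂ h₁₃ h₂₃

/-- If a `G`-invariant lamination system has a non-leaf ideal polygon `P` with `v_G(P)`
dense in `S¹`, then `G` is not abelian. -/
theorem stmt17 (G : Subgroup (Circle ≃ₜ Circle)) (hor : ∀ g ∈ G, OrientPres g)
    (L : Set (Set Circle)) (hL : LamSys L) (hinv : GInv G L)
    (P : Set (Set Circle)) (hP : IsGap L P) (hfin : (vset P).Finite) (hnl : ¬ IsLeafGap P)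
    (hdense : Dense (vOrb G P)) :
    ¬ ∀ a ∈ G, ∀ b ∈ G, a * b = b * a :=
  stmt17_general G L hL hinv P hP hfin hnl hdense
end
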